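/- In the connexive-style variant of BDi obtained by replacing ∼(A→B)↔(¬∼A∧∼B) with ∼(A→B)↔(¬∼A→∼B), the formulas (p ∧ ∼¬∼p) → ∼¬∼p and ∼((p ∧ ∼¬∼p) → ∼¬∼p) are both derivable; hence the system is negation inconsistent (even without the axiom A→∼⊥). -/
import Mathlib


inductive Fm : Type where
  | atom : Nat → Fm
  | bot : Fm
  | snot : Fm → Fm
  | and : Fm → Fm → Fm
  | or : Fm → Fm → Fm
  | imp : Fm → Fm → Fm
deriving DecidableEq

/-- Intuitionistic/Boolean negation `¬A := A → ⊥`. -/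
def negFm (A : Fm) : Fm := Fm.imp A Fm.bot

/-- Biconditional `A ↔ B := (A→B) ∧ (B→A)`. -/
def iffFm (A B : Fm) : Fm := Fm.and (Fm.imp A B) (Fm.imp B A)

/-- Hilbert-style derivability: intuitionistic positive axioms Ax1, Ax2, Ax4–Ax10,
modus ponens, plus extra axioms from `Ax`. -/
inductive Deriv (Ax : Fm → Prop) : Fm → Prop where
  | extra {A} : Ax A → Deriv Ax A
  | ax1 (A B) : Deriv Ax (Fm.imp A (Fm.imp B A))
  | ax2 (A B C) : Deriv Ax (Fm.imp (Fm.imp A (Fm.imp B C)) (Fm.imp (Fm.imp A B) (Fm.imp A C)))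
  | ax4 (A B) : Deriv Ax (Fm.imp (Fm.and A B) A)
  | ax5 (A B) : Deriv Ax (Fm.imp (Fm.and A B) B)
  | ax6 (A B C) : Deriv Ax (Fm.imp (Fm.imp C A) (Fm.imp (Fm.imp C B) (Fm.imp C (Fm.and A B))))
  | ax7 (A B) : Deriv Ax (Fm.imp A (Fm.or A B))
  | ax8 (A B) : Deriv Ax (Fm.imp B (Fm.or A B))
  | ax9 (A B C) : Deriv Ax (Fm.imp (Fm.imp A C) (Fm.imp (Fm.imp B C) (Fm.imp (Fm.or A B) C)))
  | ax10 (A) : Deriv Ax (Fm.imp Fm.bot A)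
  | mp {A B} : Deriv Ax (Fm.imp A B) → Deriv Ax A → Deriv Ax B

/-- The connexive-style variant of BDi: the implication de Morgan axiom is
replaced by `∼(A→B) ↔ (¬∼A → ∼B)` (without the axiom `A → ∼⊥`). -/
inductive CAx : Fm → Prop where
  | dne (A) : CAx (iffFm (Fm.snot (Fm.snot A)) A)
  | dmAnd (A B) : CAx (iffFm (Fm.snot (Fm.and A B)) (Fm.or (Fm.snot A) (Fm.snot B)))
  | dmOr (A B) : CAx (iffFm (Fm.snot (Fm.or A B)) (Fm.and (Fm.snot A) (Fm.snot B)))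
  | dmImpC (A B) : CAx (iffFm (Fm.snot (Fm.imp A B)) (Fm.imp (negFm (Fm.snot A)) (Fm.snot B)))

/-- The witness formula `(p ∧ ∼¬∼p) → ∼¬∼p` for `p := atom 0`. -/
def witness16 : Fm :=
  Fm.imp (Fm.and (Fm.atom 0) (Fm.snot (negFm (Fm.snot (Fm.atom 0)))))
    (Fm.snot (negFm (Fm.snot (Fm.atom 0))))


namespace ProofHelpers

lemma comp {Ax} {A B C : Fm} (h1 : Deriv Ax (Fm.imp A B)) (h2 : Deriv Ax (Fm.imp B C)) :
    Deriv Ax (Fm.imp A C) :=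
  .mp (.mp (.ax2 A B C) (.mp (.ax1 (Fm.imp B C) A) h2)) h1

/-- B combinator: (B→C)→((A→B)→(A→C)) -/
lemma bcomb {Ax} (A B C : Fm) :
    Deriv Ax (Fm.imp (Fm.imp B C) (Fm.imp (Fm.imp A B) (Fm.imp A C))) :=
  comp (.ax1 (Fm.imp B C) A) (.ax2 A B C)

/-- from D→C derive (C→E)→(D→E) -/
lemma contrap {Ax} {D C : Fm} (E : Fm) (h : Deriv Ax (Fm.imp D C)) :
    Deriv Ax (Fm.imp (Fm.imp C E) (Fm.imp D E)) :=
  .mp (.mp (.ax2 (Fm.imp C E) (Fm.imp D C) (Fm.imp D E)) (bcomb D C E))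
      (.mp (.ax1 (Fm.imp D C) (Fm.imp C E)) h)

end ProofHelpers
/-- In the connexive-style variant of BDi, both `(p ∧ ∼¬∼p) → ∼¬∼p` and its
strong negation are derivable, so the system is negation inconsistent (even
without the axiom `A → ∼⊥`). -/
theorem connexive_variant_negation_inconsistent :
    Deriv CAx witness16 ∧ Deriv CAx (Fm.snot witness16) := by
  constructor
  · exact Deriv.ax5 (Fm.atom 0) (Fm.snot (negFm (Fm.snot (Fm.atom 0))))
  · set p := Fm.atom 0
    set X := Fm.snot (negFm (Fm.snot p)) with hX
    set A := Fm.and p X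
    -- backward direction of dmAnd: (∼p ∨ ∼X) → ∼A
    have h1 : Deriv CAx (Fm.imp (Fm.or (Fm.snot p) (Fm.snot X)) (Fm.snot A)) :=
      .mp (.ax5 _ _) (.extra (CAx.dmAnd p X))
    -- contrapose: ¬∼A → ¬(∼p ∨ ∼X)
    have h2 : Deriv CAx (Fm.imp (negFm (Fm.snot A)) (negFm (Fm.or (Fm.snot p) (Fm.snot X)))) :=
      ProofHelpers.contrap Fm.bot h1
    -- ¬(∼p ∨ ∼X) → ¬∼p
    have h3 : Deriv CAx (Fm.imp (negFm (Fm.or (Fm.snot p) (Fm.snot X))) (negFm (Fm.snot p))) :=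
      ProofHelpers.contrap Fm.bot (.ax7 (Fm.snot p) (Fm.snot X))
    -- ¬∼p → ∼X  (since ∼X = ∼∼¬∼p, by dne backward)
    have h4 : Deriv CAx (Fm.imp (negFm (Fm.snot p)) (Fm.snot X)) :=
      .mp (.ax5 _ _) (.extra (CAx.dne (negFm (Fm.snot p))))
    have h5 : Deriv CAx (Fm.imp (negFm (Fm.snot A)) (Fm.snot X)) :=
      ProofHelpers.comp (ProofHelpers.comp h2 h3) h4
    have h6 : Deriv CAx (Fm.imp (Fm.imp (negFm (Fm.snot A)) (Fm.snot X)) (Fm.snot (Fm.imp A X))) :=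
      .mp (.ax5 _ _) (.extra (CAx.dmImpC A X))
    exact .mp h6 h5
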